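/- arXiv:1005.2496 — 5 statements merged into one kernel-verified Lean document; each statement's English description precedes it below -/
import Mathlib

section
/- If L is a loop, then the vector space kL spanned by L, with multiplication induced from L, grouplike coproduct Δ(a)=a⊗a, counit ε(a)=1, and S(a)=a⁻¹, is a Hopf quasigroup. -/
open TensorProduct

/-- A Hopf quasigroup over a field `k`: a unital (not necessarily associative) algebra
and coassociative counital coalgebra, with `comul` and `counit` algebra maps, together
with an antipode `antipode` satisfying
`S(h₁)(h₂g) = h₁(S(h₂)g) = (gh₁)S(h₂) = (gS(h₁))h₂ = ε(h)g`. -/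
structure HopfQuasigroup (k : Type*) [Field k] (H : Type*) [AddCommMonoid H] [Module k H] where
  mul : H →ₗ[k] H →ₗ[k] H
  one : H
  comul : H →ₗ[k] H ⊗[k] H
  counit : H →ₗ[k] k
  antipode : H →ₗ[k] H
  one_mul : ∀ h, mul one h = h
  mul_one : ∀ h, mul h one = h
  coassoc : ∀ h, (TensorProduct.assoc k H H H) ((comul.rTensor H) (comul h))
      = (LinearMap.lTensor H comul) (comul h)
  counit_comul : ∀ h, (TensorProduct.lid k H) ((counit.rTensor H) (comul h)) = h
  comul_counit : ∀ h, (TensorProduct.rid k H) ((LinearMap.lTensor H counit) (comul h)) = h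
  counit_one : counit one = 1
  counit_mul : ∀ a b, counit (mul a b) = counit a * counit b
  comul_one : comul one = one ⊗ₜ[k] one
  comul_mul : ∀ a b, comul (mul a b)
      = (TensorProduct.map (TensorProduct.lift mul) (TensorProduct.lift mul))
          ((TensorProduct.tensorTensorTensorComm k H H H H) ((comul a) ⊗ₜ[k] (comul b)))
  -- `S(h₁)(h₂ g) = ε(h) g`
  antipode_mul_left : ∀ g h,
      TensorProduct.lift ((mul.comp antipode).compl₂ (mul.flip g)) (comul h) = counit h • g
  -- `h₁(S(h₂) g) = ε(h) g`
  mul_antipode_left : ∀ g h,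
      TensorProduct.lift (mul.compl₂ ((mul.comp antipode).flip g)) (comul h) = counit h • g
  -- `(g h₁)S(h₂) = ε(h) g`
  antipode_mul_right : ∀ g h,
      TensorProduct.lift ((mul.comp (mul g)).compl₂ antipode) (comul h) = counit h • g
  -- `(g S(h₁))h₂ = ε(h) g`
  mul_antipode_right : ∀ g h,
      TensorProduct.lift (mul.comp ((mul g).comp antipode)) (comul h) = counit h • g

variable {k H : Type*} [Field k] [AddCommMonoid H] [Module k H]


/-- A loop: a set with a binary operation, a two-sided neutral element, and
two-sided inverses satisfying `a(a⁻¹b) = a⁻¹(ab) = (ba⁻¹)a = (ba)a⁻¹ = b`. -/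
class Loop (L : Type*) extends Mul L, One L, Inv L where
  one_mul : ∀ a : L, 1 * a = a
  mul_one : ∀ a : L, a * 1 = a
  mul_inv_mul : ∀ a b : L, a * (a⁻¹ * b) = b
  inv_mul_mul : ∀ a b : L, a⁻¹ * (a * b) = b
  mul_inv_mul' : ∀ a b : L, (b * a⁻¹) * a = b
  mul_mul_inv : ∀ a b : L, (b * a) * a⁻¹ = b

variable {k : Type*} [Field k] {L : Type*} [Loop L]

/-- The linearised multiplication of the loop `L` on `kL = L →₀ k`. -/
noncomputable def loopMul (k : Type*) [Field k] (L : Type*) [Loop L] :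
    (L →₀ k) →ₗ[k] (L →₀ k) →ₗ[k] (L →₀ k) :=
  Finsupp.lsum k fun a => LinearMap.toSpanSingleton k ((L →₀ k) →ₗ[k] (L →₀ k))
    (Finsupp.lmapDomain k k (fun b => a * b))

/-- The grouplike coproduct `Δ(a) = a ⊗ a` on `kL`. -/
noncomputable def loopComul (k : Type*) [Field k] (L : Type*) [Loop L] :
    (L →₀ k) →ₗ[k] (L →₀ k) ⊗[k] (L →₀ k) :=
  Finsupp.lsum k fun a => LinearMap.toSpanSingleton k ((L →₀ k) ⊗[k] (L →₀ k))
    (Finsupp.single a 1 ⊗ₜ[k] Finsupp.single a 1)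

/-- The counit `ε(a) = 1` on `kL`. -/
noncomputable def loopCounit (k : Type*) [Field k] (L : Type*) [Loop L] :
    (L →₀ k) →ₗ[k] k :=
  Finsupp.lsum k fun _ => LinearMap.id

/-- The antipode `S(a) = a⁻¹` on `kL`. -/
noncomputable def loopAntipode (k : Type*) [Field k] (L : Type*) [Loop L] :
    (L →₀ k) →ₗ[k] (L →₀ k) :=
  Finsupp.lmapDomain k k (fun a : L => a⁻¹)

@[simp] lemma loopMul_single (a b : L) (x y : k) :
    loopMul k L (Finsupp.single a x) (Finsupp.single b y) = Finsupp.single (a * b) (x * y) := by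
  simp [loopMul, Finsupp.smul_single]

@[simp] lemma loopComul_single (a : L) (x : k) :
    loopComul k L (Finsupp.single a x)
      = x • ((Finsupp.single a 1 : L →₀ k) ⊗ₜ[k] (Finsupp.single a 1 : L →₀ k)) := by
  simp [loopComul]

@[simp] lemma loopCounit_single (a : L) (x : k) :
    loopCounit k L (Finsupp.single a x) = x := by
  simp [loopCounit]

@[simp] lemma loopAntipode_single (a : L) (x : k) :
    loopAntipode k L (Finsupp.single a x) = Finsupp.single a⁻¹ x := by
  simp [loopAntipode]

lemma loop_inv_mul_mul (a : L) (g : L →₀ k) :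
    loopMul k L (Finsupp.single a⁻¹ 1) (loopMul k L (Finsupp.single a 1) g) = g := by
  induction g using Finsupp.induction_linear with
  | zero => simp
  | add f g hf hg => simp [hf, hg]
  | single b y => simp [Loop.inv_mul_mul]

lemma loop_mul_inv_mul (a : L) (g : L →₀ k) :
    loopMul k L (Finsupp.single a 1) (loopMul k L (Finsupp.single a⁻¹ 1) g) = g := by
  induction g using Finsupp.induction_linear with
  | zero => simp
  | add f g hf hg => simp [hf, hg]
  | single b y => simp [Loop.mul_inv_mul]

lemma loop_mul_mul_inv (a : L) (g : L →₀ k) :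
    loopMul k L (loopMul k L g (Finsupp.single a 1)) (Finsupp.single a⁻¹ 1) = g := by
  induction g using Finsupp.induction_linear with
  | zero => simp
  | add f g hf hg => simp [hf, hg]
  | single b y => simp [Loop.mul_mul_inv]

lemma loop_mul_inv_mul' (a : L) (g : L →₀ k) :
    loopMul k L (loopMul k L g (Finsupp.single a⁻¹ 1)) (Finsupp.single a 1) = g := by
  induction g using Finsupp.induction_linear with
  | zero => simp
  | add f g hf hg => simp [hf, hg]
  | single b y => simp [Loop.mul_inv_mul']

set_option maxHeartbeats 2000000
set_option synthInstance.maxHeartbeats 400000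

/-- If `L` is a loop then `kL`, with multiplication induced from `L`, grouplike
coproduct `Δ(a) = a ⊗ a`, counit `ε(a) = 1` and `S(a) = a⁻¹`, is a Hopf quasigroup. -/
theorem loopAlgebra_hopfQuasigroup (k : Type*) [Field k] (L : Type*) [Loop L] :
    ∃ hq : HopfQuasigroup k (L →₀ k),
      hq.mul = loopMul k L ∧ hq.one = Finsupp.single (1 : L) (1 : k) ∧
      hq.comul = loopComul k L ∧ hq.counit = loopCounit k L ∧
      hq.antipode = loopAntipode k L := by
  refine ⟨⟨loopMul k L, Finsupp.single (1 : L) (1 : k), loopComul k L, loopCounit k L,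
      loopAntipode k L, ?_, ?_, ?_, ?_, ?_, ?_, ?_, ?_, ?_, ?_, ?_, ?_, ?_⟩,
      rfl, rfl, rfl, rfl, rfl⟩
  · intro h
    induction h using Finsupp.induction_linear with
    | zero => simp
    | add f g hf hg => simp [hf, hg]
    | single a x => simp [Loop.one_mul]
  · intro h
    induction h using Finsupp.induction_linear with
    | zero => simp
    | add f g hf hg => simp [hf, hg]
    | single a x => simp [Loop.mul_one]
  · intro h
    induction h using Finsupp.induction_linear with
    | zero => simp
    | add f g hf hg => rw [map_add, map_add, map_add, hf, hg, map_add]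
    | single a x => simp [TensorProduct.smul_tmul']
  · intro h
    have key : (TensorProduct.lid k (L →₀ k)).toLinearMap ∘ₗ
        ((loopCounit k L).rTensor (L →₀ k) ∘ₗ loopComul k L) = LinearMap.id := by
      apply Finsupp.lhom_ext
      intro a b
      simp only [LinearMap.coe_comp, LinearEquiv.coe_coe, Function.comp_apply,
        loopComul_single, map_smul, LinearMap.rTensor_tmul, loopCounit_single,
        LinearEquiv.map_smul, TensorProduct.lid_tmul, one_smul, Finsupp.smul_single',
        mul_one, LinearMap.id_apply]
    exact DFunLike.congr_fun key h
  · intro h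
    have key : (TensorProduct.rid k (L →₀ k)).toLinearMap ∘ₗ
        (LinearMap.lTensor (L →₀ k) (loopCounit k L) ∘ₗ loopComul k L) = LinearMap.id := by
      apply Finsupp.lhom_ext
      intro a b
      simp only [LinearMap.coe_comp, LinearEquiv.coe_coe, Function.comp_apply,
        loopComul_single, map_smul, LinearMap.lTensor_tmul, loopCounit_single,
        LinearEquiv.map_smul, TensorProduct.rid_tmul, one_smul, Finsupp.smul_single',
        mul_one, LinearMap.id_apply]
    exact DFunLike.congr_fun key h
  · simp
  · intro a b
    induction a using Finsupp.induction_linear with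
    | zero => simp
    | add f g hf hg => simp [hf, hg, add_mul]
    | single a x =>
      induction b using Finsupp.induction_linear with
      | zero => simp
      | add f g hf hg => simp [hf, hg, mul_add]
      | single b y => simp only [loopMul_single, loopCounit_single]
  · simp [Loop.mul_one]
  · intro a b
    induction a using Finsupp.induction_linear with
    | zero => simp
    | add f g hf hg =>
      rw [map_add, LinearMap.add_apply, map_add, hf, hg, map_add, add_tmul, map_add, map_add]
    | single a x =>
      induction b using Finsupp.induction_linear with
      | zero => simp
      | add f g hf hg =>
        rw [map_add, map_add, hf, hg, map_add, tmul_add, map_add, map_add]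
      | single b y =>
        simp only [loopMul_single, loopComul_single, ← TensorProduct.smul_tmul',
          TensorProduct.tmul_smul, map_smul,
          TensorProduct.tensorTensorTensorComm_tmul, TensorProduct.map_tmul,
          TensorProduct.lift.tmul, smul_smul, mul_one]
        rw [mul_comm y x]
  · intro g h
    induction h using Finsupp.induction_linear with
    | zero => simp
    | add f g' hf hg => rw [map_add, map_add, hf, hg, map_add, add_smul]
    | single a x =>
      simp only [loopComul_single, loopCounit_single, map_smul, TensorProduct.lift.tmul,
        LinearMap.compl₂_apply, LinearMap.coe_comp, Function.comp_apply, LinearMap.flip_apply,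
        loopAntipode_single]
      rw [loop_inv_mul_mul]
  · intro g h
    induction h using Finsupp.induction_linear with
    | zero => simp
    | add f g' hf hg => rw [map_add, map_add, hf, hg, map_add, add_smul]
    | single a x =>
      simp only [loopComul_single, loopCounit_single, map_smul, TensorProduct.lift.tmul,
        LinearMap.compl₂_apply, LinearMap.coe_comp, Function.comp_apply, LinearMap.flip_apply,
        loopAntipode_single]
      rw [loop_mul_inv_mul]
  · intro g h
    induction h using Finsupp.induction_linear with
    | zero => simp
    | add f g' hf hg => rw [map_add, map_add, hf, hg, map_add, add_smul]
    | single a x =>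
      simp only [loopComul_single, loopCounit_single, map_smul, TensorProduct.lift.tmul,
        LinearMap.compl₂_apply, LinearMap.coe_comp, Function.comp_apply, LinearMap.flip_apply,
        loopAntipode_single]
      rw [loop_mul_mul_inv]
  · intro g h
    induction h using Finsupp.induction_linear with
    | zero => simp
    | add f g' hf hg => rw [map_add, map_add, hf, hg, map_add, add_smul]
    | single a x =>
      simp only [loopComul_single, loopCounit_single, map_smul, TensorProduct.lift.tmul,
        LinearMap.compl₂_apply, LinearMap.coe_comp, Function.comp_apply, LinearMap.flip_apply,
        loopAntipode_single]
      rw [loop_mul_inv_mul']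
end

section
/- If M and N are left quasimodules over a Hopf quasigroup H, then M⊗N with the diagonal action h·(m⊗n) = h₍₁₎·m ⊗ h₍₂₎·n is a left H-quasimodule. -/
open TensorProduct

variable {k H : Type*} [Field k] [AddCommMonoid H] [Module k H]

/-- A left quasimodule over a Hopf quasigroup: `1·m = m` and
`h₁·(S(h₂)·m) = ε(h)m = S(h₁)·(h₂·m)`. -/
structure LeftQuasimodule (hq : HopfQuasigroup k H) (M : Type*)
    [AddCommMonoid M] [Module k M] where
  act : H →ₗ[k] M →ₗ[k] M
  act_one : ∀ m, act hq.one m = m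
  -- `h₁·(S(h₂)·m) = ε(h) m`
  act_antipode : ∀ h m,
      TensorProduct.lift (act.compl₂ ((act.comp hq.antipode).flip m)) (hq.comul h)
        = hq.counit h • m
  -- `S(h₁)·(h₂·m) = ε(h) m`
  antipode_act : ∀ h m,
      TensorProduct.lift ((act.comp hq.antipode).compl₂ (act.flip m)) (hq.comul h)
        = hq.counit h • m


/-- The diagonal action `h·(m⊗n) = h₁·m ⊗ h₂·n` of `H` on `M ⊗ N`. -/
noncomputable def diagAct {hq : HopfQuasigroup k H} {M N : Type*}
    [AddCommMonoid M] [Module k M] [AddCommMonoid N] [Module k N]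
    (qm : LeftQuasimodule hq M) (qn : LeftQuasimodule hq N) :
    H →ₗ[k] (M ⊗[k] N) →ₗ[k] (M ⊗[k] N) :=
  (TensorProduct.homTensorHomMap (RingHom.id k) M N M N).comp
    ((TensorProduct.map qm.act qn.act).comp hq.comul)

namespace HQAux
open LinearMap TensorProduct

variable (hq : HopfQuasigroup k H)

/-- `x ⊗ y ↦ (e ↦ S(x)·(y·e))` -/
noncomputable def ΛL {E : Type*} [AddCommMonoid E] [Module k E] (α : H →ₗ[k] E →ₗ[k] E) :
    H ⊗[k] H →ₗ[k] E →ₗ[k] E :=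
  TensorProduct.lift (((LinearMap.llcomp k E E E).comp (α.comp hq.antipode)).compl₂ α)

/-- `x ⊗ y ↦ (e ↦ x·(S(y)·e))` -/
noncomputable def ΛR {E : Type*} [AddCommMonoid E] [Module k E] (α : H →ₗ[k] E →ₗ[k] E) :
    H ⊗[k] H →ₗ[k] E →ₗ[k] E :=
  TensorProduct.lift (((LinearMap.llcomp k E E E).comp α).compl₂ (α.comp hq.antipode))

@[simp] lemma ΛL_tmul {E : Type*} [AddCommMonoid E] [Module k E] (α : H →ₗ[k] E →ₗ[k] E)
    (x y : H) : ΛL hq α (x ⊗ₜ[k] y) = (α (hq.antipode x)).comp (α y) := rfl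

@[simp] lemma ΛR_tmul {E : Type*} [AddCommMonoid E] [Module k E] (α : H →ₗ[k] E →ₗ[k] E)
    (x y : H) : ΛR hq α (x ⊗ₜ[k] y) = (α x).comp (α (hq.antipode y)) := rfl

def IsColl {E : Type*} [AddCommMonoid E] [Module k E] (L : H ⊗[k] H →ₗ[k] E →ₗ[k] E) : Prop :=
  ∀ h, L (hq.comul h) = hq.counit h • LinearMap.id

lemma isColl_ΛL_mul : IsColl hq (ΛL hq hq.mul) := by
  intro h
  apply LinearMap.ext; intro g
  simp only [LinearMap.smul_apply, LinearMap.id_apply]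
  rw [← hq.antipode_mul_left g h]
  have : ∀ t : H ⊗[k] H, ΛL hq hq.mul t g
      = TensorProduct.lift ((hq.mul.comp hq.antipode).compl₂ (hq.mul.flip g)) t := by
    intro t
    induction t with
    | zero => simp
    | tmul x y => simp [ΛL]
    | add u v hu hv => simp [map_add, hu, hv]
  simp [this]

lemma isColl_ΛR_mul : IsColl hq (ΛR hq hq.mul) := by
  intro h
  apply LinearMap.ext; intro g
  simp only [LinearMap.smul_apply, LinearMap.id_apply]
  rw [← hq.mul_antipode_left g h]
  have : ∀ t : H ⊗[k] H, ΛR hq hq.mul t g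
      = TensorProduct.lift (hq.mul.compl₂ ((hq.mul.comp hq.antipode).flip g)) t := by
    intro t
    induction t with
    | zero => simp
    | tmul x y => simp [ΛR]
    | add u v hu hv => simp [map_add, hu, hv]
  simp [this]

variable {M : Type*} [AddCommMonoid M] [Module k M]

lemma isColl_ΛR_act (qm : LeftQuasimodule hq M) : IsColl hq (ΛR hq qm.act) := by
  intro h
  apply LinearMap.ext; intro m
  simp only [LinearMap.smul_apply, LinearMap.id_apply]
  rw [← qm.act_antipode h m]
  have : ∀ t : H ⊗[k] H, ΛR hq qm.act t m
      = TensorProduct.lift (qm.act.compl₂ ((qm.act.comp hq.antipode).flip m)) t := by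
    intro t
    induction t with
    | zero => simp
    | tmul x y => simp [ΛR]
    | add u v hu hv => simp [map_add, hu, hv]
  simp [this]

lemma isColl_ΛL_act (qm : LeftQuasimodule hq M) : IsColl hq (ΛL hq qm.act) := by
  intro h
  apply LinearMap.ext; intro m
  simp only [LinearMap.smul_apply, LinearMap.id_apply]
  rw [← qm.antipode_act h m]
  have : ∀ t : H ⊗[k] H, ΛL hq qm.act t m
      = TensorProduct.lift ((qm.act.comp hq.antipode).compl₂ (qm.act.flip m)) t := by
    intro t
    induction t with
    | zero => simp
    | tmul x y => simp [ΛL]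
    | add u v hu hv => simp [map_add, hu, hv]
  simp [this]


variable {V W : Type*} [AddCommMonoid V] [Module k V] [AddCommMonoid W] [Module k W]

lemma leftComm_aux (a : H) (u : H ⊗[k] H) (w : H) :
    (leftComm k H (H ⊗[k] H) H) (a ⊗ₜ (u ⊗ₜ w)) = u ⊗ₜ (a ⊗ₜ w) := by
  induction u with
  | zero => simp [tmul_zero, zero_tmul]
  | tmul x y => simp [leftComm_tmul]
  | add u v hu hv =>
      rw [add_tmul, tmul_add, map_add, hu, hv, add_tmul]

lemma lTensor_eq_map {P Q : Type*} [AddCommMonoid P] [Module k P] [AddCommMonoid Q] [Module k Q]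
    (f : P →ₗ[k] Q) : LinearMap.lTensor V f = map LinearMap.id f := rfl

lemma core_X (A : H ⊗[k] H →ₗ[k] V →ₗ[k] V) (B : H ⊗[k] H →ₗ[k] W →ₗ[k] W)
    (hA : IsColl hq A) (hB : IsColl hq B) (h : H) :
    homTensorHomMap (RingHom.id k) V W V W (map A B ((leftComm k H (H ⊗[k] H) H)
      ((LinearMap.lTensor H ((LinearMap.rTensor H hq.comul).comp hq.comul)) (hq.comul h))))
    = hq.counit h • LinearMap.id := by
  have key : ∀ t : H ⊗[k] (H ⊗[k] H),
      homTensorHomMap (RingHom.id k) V W V W (map A B ((leftComm k H (H ⊗[k] H) H)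
        ((LinearMap.lTensor H (LinearMap.rTensor H hq.comul)) t)))
      = LinearMap.lTensor V (B ((LinearMap.lTensor H
          ((TensorProduct.lid k H).toLinearMap.comp (LinearMap.rTensor H hq.counit))) t)) := by
    intro t
    induction t with
    | zero => simp
    | tmul a u =>
        induction u with
        | zero => simp [tmul_zero]
        | tmul v w =>
            simp only [LinearMap.lTensor_tmul, LinearMap.rTensor_tmul, leftComm_aux,
              map_tmul, hA v, LinearMap.comp_apply, LinearEquiv.coe_coe, lid_tmul]
            rw [← smul_tmul', LinearMap.map_smul]
            simp only [homTensorHomMap_apply, tmul_smul, LinearMap.map_smul, LinearMap.lTensor_smul]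
            rfl
        | add u v hu hv =>
            simp only [tmul_add, map_add, LinearMap.lTensor_add] at hu hv ⊢
            rw [hu, hv]
    | add u v hu hv =>
        simp only [map_add, LinearMap.lTensor_add] at hu hv ⊢
        rw [hu, hv]
  have e1 : (LinearMap.lTensor H ((LinearMap.rTensor H hq.comul).comp hq.comul)) (hq.comul h)
      = (LinearMap.lTensor H (LinearMap.rTensor H hq.comul))
          ((LinearMap.lTensor H hq.comul) (hq.comul h)) := by
    rw [LinearMap.lTensor_comp, LinearMap.comp_apply]
  rw [e1, key]
  have e2 : (LinearMap.lTensor H ((TensorProduct.lid k H).toLinearMap.comp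
        (LinearMap.rTensor H hq.counit))) ((LinearMap.lTensor H hq.comul) (hq.comul h))
      = hq.comul h := by
    rw [← LinearMap.comp_apply, ← LinearMap.lTensor_comp]
    have : ((TensorProduct.lid k H).toLinearMap.comp
        (LinearMap.rTensor H hq.counit)).comp hq.comul = LinearMap.id := by
      apply LinearMap.ext; intro a
      simpa using hq.counit_comul a
    rw [this]
    simp
  rw [e2, hB h]
  simp [LinearMap.lTensor_smul, LinearMap.lTensor_id]


lemma rTensor_eq_map {P Q : Type*} [AddCommMonoid P] [Module k P] [AddCommMonoid Q] [Module k Q]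
    (f : P →ₗ[k] Q) : LinearMap.rTensor W f = map f LinearMap.id := rfl

lemma core_Y (A : H ⊗[k] H →ₗ[k] V →ₗ[k] V) (B : H ⊗[k] H →ₗ[k] W →ₗ[k] W)
    (hA : IsColl hq A) (hB : IsColl hq B) (h : H) :
    homTensorHomMap (RingHom.id k) V W V W (map A B ((TensorProduct.comm k (H ⊗[k] H) (H ⊗[k] H))
      ((leftComm k H (H ⊗[k] H) H)
      ((LinearMap.lTensor H ((LinearMap.rTensor H hq.comul).comp hq.comul)) (hq.comul h)))))
    = hq.counit h • LinearMap.id := by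
  have key : ∀ t : H ⊗[k] (H ⊗[k] H),
      homTensorHomMap (RingHom.id k) V W V W (map A B ((TensorProduct.comm k (H ⊗[k] H) (H ⊗[k] H))
        ((leftComm k H (H ⊗[k] H) H) ((LinearMap.lTensor H (LinearMap.rTensor H hq.comul)) t))))
      = LinearMap.rTensor W (A ((LinearMap.lTensor H
          ((TensorProduct.lid k H).toLinearMap.comp (LinearMap.rTensor H hq.counit))) t)) := by
    intro t
    induction t with
    | zero => simp
    | tmul a u =>
        induction u with
        | zero => simp [tmul_zero]
        | tmul v w =>
            simp only [LinearMap.lTensor_tmul, LinearMap.rTensor_tmul, leftComm_aux,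
              comm_tmul, map_tmul, hB v, LinearMap.comp_apply, LinearEquiv.coe_coe, lid_tmul]
            rw [tmul_smul, LinearMap.map_smul]
            simp only [homTensorHomMap_apply, tmul_smul, LinearMap.map_smul, LinearMap.rTensor_smul]
            rfl
        | add u v hu hv =>
            simp only [tmul_add, map_add, LinearMap.rTensor_add] at hu hv ⊢
            rw [hu, hv]
    | add u v hu hv =>
        simp only [map_add, LinearMap.rTensor_add] at hu hv ⊢
        rw [hu, hv]
  have e1 : (LinearMap.lTensor H ((LinearMap.rTensor H hq.comul).comp hq.comul)) (hq.comul h)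
      = (LinearMap.lTensor H (LinearMap.rTensor H hq.comul))
          ((LinearMap.lTensor H hq.comul) (hq.comul h)) := by
    rw [LinearMap.lTensor_comp, LinearMap.comp_apply]
  rw [e1, key]
  have e2 : (LinearMap.lTensor H ((TensorProduct.lid k H).toLinearMap.comp
        (LinearMap.rTensor H hq.counit))) ((LinearMap.lTensor H hq.comul) (hq.comul h))
      = hq.comul h := by
    rw [← LinearMap.comp_apply, ← LinearMap.lTensor_comp]
    have : ((TensorProduct.lid k H).toLinearMap.comp
        (LinearMap.rTensor H hq.counit)).comp hq.comul = LinearMap.id := by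
      apply LinearMap.ext; intro a
      simpa using hq.counit_comul a
    rw [this]
    simp
  rw [e2, hA h]
  simp [LinearMap.rTensor_smul, LinearMap.rTensor_id]


/-- Componentwise left multiplication of `H ⊗ H` on itself. -/
noncomputable def M2 : H ⊗[k] H →ₗ[k] (H ⊗[k] H) →ₗ[k] (H ⊗[k] H) :=
  (homTensorHomMap (RingHom.id k) H H H H).comp (map hq.mul hq.mul)

/-- `h ↦ S(h₂) ⊗ S(h₁)`. -/
noncomputable def Qm : H →ₗ[k] H ⊗[k] H :=
  (TensorProduct.comm k H H).toLinearMap.comp ((map hq.antipode hq.antipode).comp hq.comul)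

@[simp] lemma M2_tmul (a b : H) : M2 hq (a ⊗ₜ[k] b) = map (hq.mul a) (hq.mul b) := by
  simp [M2]

lemma M2_eq (u v : H ⊗[k] H) :
    M2 hq u v = map (TensorProduct.lift hq.mul) (TensorProduct.lift hq.mul)
      ((tensorTensorTensorComm k H H H H) (u ⊗ₜ[k] v)) := by
  induction u with
  | zero => simp [zero_tmul]
  | tmul a b =>
      induction v with
      | zero => simp [tmul_zero]
      | tmul c d => simp [tensorTensorTensorComm_tmul]
      | add u v hu hv => simp only [map_add, tmul_add, hu, hv]
  | add u v hu hv =>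
      simp only [map_add, add_tmul, LinearMap.add_apply, hu, hv]

lemma M2_comul_comul (a b : H) :
    M2 hq (hq.comul a) (hq.comul b) = hq.comul (hq.mul a b) := by
  rw [M2_eq, ← hq.comul_mul]

lemma M2_one (u : H ⊗[k] H) : M2 hq u (hq.one ⊗ₜ[k] hq.one) = u := by
  induction u with
  | zero => simp
  | tmul a b => simp [hq.mul_one]
  | add u v hu hv => simp only [map_add, LinearMap.add_apply, hu, hv]

/-- `h₁ S(h₂) = ε(h) 1`. -/
lemma hSh (h : H) :
    TensorProduct.lift (hq.mul.compl₂ hq.antipode) (hq.comul h) = hq.counit h • hq.one := by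
  have := hq.antipode_mul_right hq.one h
  have e : (hq.mul.comp (hq.mul hq.one)).compl₂ hq.antipode = hq.mul.compl₂ hq.antipode := by
    apply LinearMap.ext; intro x; apply LinearMap.ext; intro y
    simp [hq.one_mul]
  rwa [e] at this

/-- coassociativity, as an equality of linear maps. -/
lemma coassoc' : (LinearMap.rTensor H hq.comul).comp hq.comul
    = ((TensorProduct.assoc k H H H).symm.toLinearMap.comp
        ((LinearMap.lTensor H hq.comul).comp hq.comul)) := by
  apply LinearMap.ext; intro h
  simp only [LinearMap.comp_apply, LinearEquiv.coe_coe]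
  rw [← hq.coassoc h]
  simp

/-- the canonical fourfold coproduct `Σ h₁ ⊗ (h₂ ⊗ (h₃ ⊗ h₄))`. -/
noncomputable def Texp (h : H) : H ⊗[k] (H ⊗[k] (H ⊗[k] H)) :=
  LinearMap.lTensor H (LinearMap.lTensor H hq.comul)
    (LinearMap.lTensor H hq.comul (hq.comul h))

lemma book1 (h : H) :
    map hq.comul hq.comul (hq.comul h)
      = (TensorProduct.assoc k H H (H ⊗[k] H)).symm (Texp hq h) := by
  have h1 : map hq.comul hq.comul (hq.comul h)
      = LinearMap.lTensor (H ⊗[k] H) hq.comul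
          (LinearMap.rTensor H hq.comul (hq.comul h)) := by
    conv_rhs => rw [← LinearMap.comp_apply, LinearMap.lTensor_comp_rTensor]
  have h2 : LinearMap.rTensor H hq.comul (hq.comul h)
      = (TensorProduct.assoc k H H H).symm (LinearMap.lTensor H hq.comul (hq.comul h)) := by
    rw [← hq.coassoc h]; simp
  have swap : ∀ w : H ⊗[k] (H ⊗[k] H),
      LinearMap.lTensor (H ⊗[k] H) hq.comul ((TensorProduct.assoc k H H H).symm w)
      = (TensorProduct.assoc k H H (H ⊗[k] H)).symm
          (LinearMap.lTensor H (LinearMap.lTensor H hq.comul) w) := by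
    intro w
    induction w with
    | zero => simp
    | tmul a u =>
        induction u with
        | zero => simp [tmul_zero]
        | tmul b c => simp
        | add u v hu hv => simp only [tmul_add, map_add, hu, hv]
    | add u v hu hv => simp only [map_add, hu, hv]
  rw [h1, h2, swap]
  rfl

lemma book2 (h : H) :
    LinearMap.lTensor H ((LinearMap.rTensor H hq.comul).comp hq.comul) (hq.comul h)
      = LinearMap.lTensor H (TensorProduct.assoc k H H H).symm.toLinearMap (Texp hq h) := by
  rw [coassoc' hq]
  rw [LinearMap.lTensor_comp, LinearMap.lTensor_comp, LinearMap.comp_apply,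
    LinearMap.comp_apply]
  rfl


/-- The inner map of the identity `S(h₁)(h₂ ⊗ -) ...`:
`x ⊗ y ↦ (X ↦ Q(x)·(Δ(y)·X))` on `H ⊗ H`. -/
noncomputable def G1 : H ⊗[k] H →ₗ[k] (H ⊗[k] H) →ₗ[k] (H ⊗[k] H) :=
  (TensorProduct.lift (LinearMap.llcomp k (H ⊗[k] H) (H ⊗[k] H) (H ⊗[k] H))).comp
    (map ((M2 hq).comp (Qm hq)) ((M2 hq).comp hq.comul))

lemma isColl_G1 : IsColl hq (G1 hq) := by
  intro h
  have fa : ∀ t : H ⊗[k] H, (map ((M2 hq).comp (Qm hq)) ((M2 hq).comp hq.comul)) t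
      = (map ((M2 hq).comp ((TensorProduct.comm k H H).toLinearMap.comp
          (map hq.antipode hq.antipode))) (M2 hq)) (map hq.comul hq.comul t) := by
    intro t
    induction t with
    | zero => simp
    | tmul x y => simp [Qm]
    | add u v hu hv => simp only [map_add, hu, hv]
  have exteq : ∀ t : H ⊗[k] (H ⊗[k] (H ⊗[k] H)),
      TensorProduct.lift (LinearMap.llcomp k (H ⊗[k] H) (H ⊗[k] H) (H ⊗[k] H))
        ((map ((M2 hq).comp ((TensorProduct.comm k H H).toLinearMap.comp
          (map hq.antipode hq.antipode))) (M2 hq))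
            ((TensorProduct.assoc k H H (H ⊗[k] H)).symm t))
      = homTensorHomMap (RingHom.id k) H H H H (map (ΛL hq hq.mul) (ΛL hq hq.mul)
          ((leftComm k H (H ⊗[k] H) H)
            (LinearMap.lTensor H (TensorProduct.assoc k H H H).symm.toLinearMap t))) := by
    intro t
    induction t with
    | zero => simp
    | tmul a u =>
        induction u with
        | zero => simp [tmul_zero]
        | tmul b v =>
            induction v with
            | zero => simp [tmul_zero]
            | tmul c d =>
                simp only [assoc_symm_tmul, map_tmul, LinearMap.lTensor_tmul,
                  LinearEquiv.coe_coe, leftComm_tmul, lift.tmul, LinearMap.llcomp_apply,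
                  LinearMap.comp_apply, comm_tmul, M2_tmul, homTensorHomMap_apply, ΛL_tmul]
                rw [TensorProduct.map_comp]
                rfl
            | add u v hu hv => simp only [tmul_add, map_add, hu, hv]
        | add u v hu hv => simp only [tmul_add, map_add, hu, hv]
    | add u v hu hv => simp only [map_add, hu, hv]
  have : G1 hq (hq.comul h)
      = TensorProduct.lift (LinearMap.llcomp k (H ⊗[k] H) (H ⊗[k] H) (H ⊗[k] H))
        ((map ((M2 hq).comp ((TensorProduct.comm k H H).toLinearMap.comp
          (map hq.antipode hq.antipode))) (M2 hq))
            ((TensorProduct.assoc k H H (H ⊗[k] H)).symm (Texp hq h))) := by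
    rw [G1, LinearMap.comp_apply, fa, book1]
  rw [this, exteq, ← book2]
  exact core_X hq _ _ (isColl_ΛL_mul hq) (isColl_ΛL_mul hq) h

lemma coll_apply {E : Type*} [AddCommMonoid E] [Module k E]
    (L : H ⊗[k] H →ₗ[k] E →ₗ[k] E) (hL : IsColl hq L) (f : H →ₗ[k] E) (h : H) :
    TensorProduct.lift (LinearMap.id : (E →ₗ[k] E) →ₗ[k] (E →ₗ[k] E))
      (map L f (LinearMap.rTensor H hq.comul (hq.comul h))) = f h := by
  have key : ∀ t : H ⊗[k] H,
      TensorProduct.lift (LinearMap.id : (E →ₗ[k] E) →ₗ[k] (E →ₗ[k] E))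
        (map L f (LinearMap.rTensor H hq.comul t))
      = f ((TensorProduct.lid k H) (LinearMap.rTensor H hq.counit t)) := by
    intro t
    induction t with
    | zero => simp
    | tmul v w =>
        simp only [LinearMap.rTensor_tmul, map_tmul, lift.tmul, LinearMap.id_apply,
          hL v, lid_tmul, map_smul]
        simp
    | add u v hu hv => simp only [map_add, hu, hv, map_add]
  rw [key, hq.counit_comul h]

lemma lift_lTensor_antipode (t : H ⊗[k] H) :
    TensorProduct.lift hq.mul (LinearMap.lTensor H hq.antipode t)
      = TensorProduct.lift (hq.mul.compl₂ hq.antipode) t := by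
  induction t with
  | zero => simp
  | tmul x y => simp
  | add u v hu hv => simp only [map_add, hu, hv]

/-- The antipode is anticomultiplicative: `Δ(S h) = S(h₂) ⊗ S(h₁)`. -/
lemma anticomul (h : H) : hq.comul (hq.antipode h) = Qm hq h := by
  have step1 : hq.comul (hq.antipode h)
      = TensorProduct.lift (LinearMap.id : ((H ⊗[k] H) →ₗ[k] (H ⊗[k] H)) →ₗ[k] _)
          (map (G1 hq) (hq.comul.comp hq.antipode)
            (LinearMap.rTensor H hq.comul (hq.comul h))) :=
    (coll_apply hq (G1 hq) (isColl_G1 hq) (hq.comul.comp hq.antipode) h).symm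
  -- gS : y ⊗ b ↦ Δ(y · S(b))
  have hgS : True := trivial
  have step2 : ∀ t : (H ⊗[k] H) ⊗[k] H,
      TensorProduct.lift (LinearMap.id : ((H ⊗[k] H) →ₗ[k] (H ⊗[k] H)) →ₗ[k] _)
          (map (G1 hq) (hq.comul.comp hq.antipode) t)
      = TensorProduct.lift ((M2 hq).comp (Qm hq))
          (LinearMap.lTensor H (hq.comul.comp ((TensorProduct.lift hq.mul).comp
            (LinearMap.lTensor H hq.antipode))) ((TensorProduct.assoc k H H H) t)) := by
    intro t
    induction t with
    | zero => simp
    | tmul u b =>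
        induction u with
        | zero => simp [zero_tmul]
        | tmul x y =>
            simp only [map_tmul, lift.tmul, LinearMap.id_apply, assoc_tmul,
              LinearMap.lTensor_tmul, LinearMap.comp_apply, G1, LinearMap.llcomp_apply]
            rw [M2_comul_comul]
        | add u v hu hv => simp only [add_tmul, map_add, hu, hv]
    | add u v hu hv => simp only [map_add, hu, hv]
  rw [step1, step2]
  have step3 : (TensorProduct.assoc k H H H)
      (LinearMap.rTensor H hq.comul (hq.comul h))
      = LinearMap.lTensor H hq.comul (hq.comul h) := hq.coassoc h
  rw [step3]
  have step4 : LinearMap.lTensor H (hq.comul.comp ((TensorProduct.lift hq.mul).comp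
            (LinearMap.lTensor H hq.antipode))) (LinearMap.lTensor H hq.comul (hq.comul h))
      = LinearMap.lTensor H ((hq.comul.comp ((TensorProduct.lift hq.mul).comp
            (LinearMap.lTensor H hq.antipode))).comp hq.comul) (hq.comul h) := by
    conv_rhs => rw [LinearMap.lTensor_comp]
    rfl
  rw [step4]
  have gSd : (hq.comul.comp ((TensorProduct.lift hq.mul).comp
        (LinearMap.lTensor H hq.antipode))).comp hq.comul
      = hq.counit.smulRight (hq.one ⊗ₜ[k] hq.one) := by
    apply LinearMap.ext; intro a
    simp only [LinearMap.comp_apply, LinearMap.smulRight_apply]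
    rw [lift_lTensor_antipode, hSh, map_smul, hq.comul_one]
  rw [gSd]
  have colw : ∀ t : H ⊗[k] H,
      LinearMap.lTensor H (hq.counit.smulRight (hq.one ⊗ₜ[k] hq.one)) t
      = ((TensorProduct.rid k H) (LinearMap.lTensor H hq.counit t)) ⊗ₜ[k]
          (hq.one ⊗ₜ[k] hq.one) := by
    intro t
    induction t with
    | zero => simp [zero_tmul]
    | tmul a b =>
        simp only [LinearMap.lTensor_tmul, LinearMap.smulRight_apply, rid_tmul]
        rw [tmul_smul, smul_tmul']
    | add u v hu hv => simp only [map_add, hu, hv, add_tmul]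
  rw [colw, hq.comul_counit, lift.tmul, LinearMap.comp_apply, M2_one]


lemma EV_R {E : Type*} [AddCommMonoid E] [Module k E] (α : H →ₗ[k] E →ₗ[k] E) (x : E)
    (t : H ⊗[k] H) :
    TensorProduct.lift (α.compl₂ ((α.comp hq.antipode).flip x)) t
      = TensorProduct.lift (LinearMap.llcomp k E E E)
          (map α (α.comp hq.antipode) t) x := by
  induction t with
  | zero => simp
  | tmul a b => simp
  | add u v hu hv => simp only [map_add, hu, hv, LinearMap.add_apply]

lemma EV_L {E : Type*} [AddCommMonoid E] [Module k E] (α : H →ₗ[k] E →ₗ[k] E) (x : E)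
    (t : H ⊗[k] H) :
    TensorProduct.lift ((α.comp hq.antipode).compl₂ (α.flip x)) t
      = TensorProduct.lift (LinearMap.llcomp k E E E)
          (map (α.comp hq.antipode) α t) x := by
  induction t with
  | zero => simp
  | tmul a b => simp
  | add u v hu hv => simp only [map_add, hu, hv, LinearMap.add_apply]

variable {M : Type*} {N : Type*} [AddCommMonoid M] [Module k M] [AddCommMonoid N] [Module k N]

/-- The diagonal action in curried form. -/
noncomputable def dact (qm : LeftQuasimodule hq M) (qn : LeftQuasimodule hq N) :
    H →ₗ[k] (M ⊗[k] N) →ₗ[k] (M ⊗[k] N) :=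
  (TensorProduct.homTensorHomMap (RingHom.id k) M N M N).comp
    ((TensorProduct.map qm.act qn.act).comp hq.comul)

/-- `Σ h₁·(S(h₂)·—) = ε(h)·id` on `M ⊗ N`. -/
lemma end_R (qm : LeftQuasimodule hq M) (qn : LeftQuasimodule hq N) (h : H) :
    TensorProduct.lift (LinearMap.llcomp k (M ⊗[k] N) (M ⊗[k] N) (M ⊗[k] N))
      (map (dact hq qm qn) ((dact hq qm qn).comp hq.antipode) (hq.comul h))
    = hq.counit h • LinearMap.id := by
  have fa : ∀ t : H ⊗[k] H,
      map (dact hq qm qn) ((dact hq qm qn).comp hq.antipode) t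
      = map ((homTensorHomMap (RingHom.id k) M N M N).comp (map qm.act qn.act))
          (((homTensorHomMap (RingHom.id k) M N M N).comp (map qm.act qn.act)).comp
            ((TensorProduct.comm k H H).toLinearMap.comp (map hq.antipode hq.antipode)))
          (map hq.comul hq.comul t) := by
    intro t
    induction t with
    | zero => simp
    | tmul x y =>
        simp only [map_tmul, LinearMap.comp_apply, dact]
        rw [anticomul hq y]
        rfl
    | add u v hu hv => simp only [map_add, hu, hv]
  have exteq : ∀ t : H ⊗[k] (H ⊗[k] (H ⊗[k] H)),
      TensorProduct.lift (LinearMap.llcomp k (M ⊗[k] N) (M ⊗[k] N) (M ⊗[k] N))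
        ((map ((homTensorHomMap (RingHom.id k) M N M N).comp (map qm.act qn.act))
          (((homTensorHomMap (RingHom.id k) M N M N).comp (map qm.act qn.act)).comp
            ((TensorProduct.comm k H H).toLinearMap.comp (map hq.antipode hq.antipode))))
          ((TensorProduct.assoc k H H (H ⊗[k] H)).symm t))
      = homTensorHomMap (RingHom.id k) M N M N (map (ΛR hq qm.act) (ΛR hq qn.act)
          ((TensorProduct.comm k (H ⊗[k] H) (H ⊗[k] H)) ((leftComm k H (H ⊗[k] H) H)
            (LinearMap.lTensor H (TensorProduct.assoc k H H H).symm.toLinearMap t)))) := by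
    intro t
    induction t with
    | zero => simp
    | tmul a u =>
        induction u with
        | zero => simp [tmul_zero]
        | tmul b v =>
            induction v with
            | zero => simp [tmul_zero]
            | tmul c d =>
                simp only [assoc_symm_tmul, map_tmul, LinearMap.lTensor_tmul,
                  LinearEquiv.coe_coe, leftComm_tmul, comm_tmul, lift.tmul,
                  LinearMap.llcomp_apply, LinearMap.comp_apply,
                  homTensorHomMap_apply, ΛR_tmul]
                rw [TensorProduct.map_comp]
                rfl
            | add u v hu hv => simp only [tmul_add, map_add, hu, hv]
        | add u v hu hv => simp only [tmul_add, map_add, hu, hv]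
    | add u v hu hv => simp only [map_add, hu, hv]
  rw [fa, book1, exteq, ← book2]
  exact core_Y hq _ _ (isColl_ΛR_act hq qm) (isColl_ΛR_act hq qn) h

/-- `Σ S(h₁)·(h₂·—) = ε(h)·id` on `M ⊗ N`. -/
lemma end_L (qm : LeftQuasimodule hq M) (qn : LeftQuasimodule hq N) (h : H) :
    TensorProduct.lift (LinearMap.llcomp k (M ⊗[k] N) (M ⊗[k] N) (M ⊗[k] N))
      (map ((dact hq qm qn).comp hq.antipode) (dact hq qm qn) (hq.comul h))
    = hq.counit h • LinearMap.id := by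
  have fa : ∀ t : H ⊗[k] H,
      map ((dact hq qm qn).comp hq.antipode) (dact hq qm qn) t
      = map (((homTensorHomMap (RingHom.id k) M N M N).comp (map qm.act qn.act)).comp
            ((TensorProduct.comm k H H).toLinearMap.comp (map hq.antipode hq.antipode)))
          ((homTensorHomMap (RingHom.id k) M N M N).comp (map qm.act qn.act))
          (map hq.comul hq.comul t) := by
    intro t
    induction t with
    | zero => simp
    | tmul x y =>
        simp only [map_tmul, LinearMap.comp_apply, dact]
        rw [anticomul hq x]
        rfl
    | add u v hu hv => simp only [map_add, hu, hv]
  have exteq : ∀ t : H ⊗[k] (H ⊗[k] (H ⊗[k] H)),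
      TensorProduct.lift (LinearMap.llcomp k (M ⊗[k] N) (M ⊗[k] N) (M ⊗[k] N))
        ((map (((homTensorHomMap (RingHom.id k) M N M N).comp (map qm.act qn.act)).comp
            ((TensorProduct.comm k H H).toLinearMap.comp (map hq.antipode hq.antipode)))
          ((homTensorHomMap (RingHom.id k) M N M N).comp (map qm.act qn.act)))
          ((TensorProduct.assoc k H H (H ⊗[k] H)).symm t))
      = homTensorHomMap (RingHom.id k) M N M N (map (ΛL hq qm.act) (ΛL hq qn.act)
          ((leftComm k H (H ⊗[k] H) H)
            (LinearMap.lTensor H (TensorProduct.assoc k H H H).symm.toLinearMap t))) := by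
    intro t
    induction t with
    | zero => simp
    | tmul a u =>
        induction u with
        | zero => simp [tmul_zero]
        | tmul b v =>
            induction v with
            | zero => simp [tmul_zero]
            | tmul c d =>
                simp only [assoc_symm_tmul, map_tmul, LinearMap.lTensor_tmul,
                  LinearEquiv.coe_coe, leftComm_tmul, comm_tmul, lift.tmul,
                  LinearMap.llcomp_apply, LinearMap.comp_apply,
                  homTensorHomMap_apply, ΛL_tmul]
                rw [TensorProduct.map_comp]
                rfl
            | add u v hu hv => simp only [tmul_add, map_add, hu, hv]
        | add u v hu hv => simp only [tmul_add, map_add, hu, hv]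
    | add u v hu hv => simp only [map_add, hu, hv]
  rw [fa, book1, exteq, ← book2]
  exact core_X hq _ _ (isColl_ΛL_act hq qm) (isColl_ΛL_act hq qn) h

lemma dact_one (qm : LeftQuasimodule hq M) (qn : LeftQuasimodule hq N) (x : M ⊗[k] N) :
    dact hq qm qn hq.one x = x := by
  have : dact hq qm qn hq.one
      = homTensorHomMap (RingHom.id k) M N M N (map qm.act qn.act (hq.one ⊗ₜ[k] hq.one)) := by
    simp [dact, hq.comul_one]
  rw [this]
  simp only [map_tmul, homTensorHomMap_apply]
  induction x with
  | zero => simp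
  | tmul m n => simp [qm.act_one, qn.act_one]
  | add u v hu hv => simp only [map_add, hu, hv]

end HQAux

/-- If `M` and `N` are left quasimodules over a Hopf quasigroup `H`, then `M ⊗ N`
with the diagonal action `h·(m⊗n) = h₁·m ⊗ h₂·n` is a left `H`-quasimodule. -/
theorem tensor_leftQuasimodule {hq : HopfQuasigroup k H} {M N : Type*}
    [AddCommMonoid M] [Module k M] [AddCommMonoid N] [Module k N]
    (qm : LeftQuasimodule hq M) (qn : LeftQuasimodule hq N) :
    ∃ q : LeftQuasimodule hq (M ⊗[k] N), q.act = diagAct qm qn := by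
  refine ⟨⟨diagAct qm qn, ?_, ?_, ?_⟩, rfl⟩
  · intro m
    exact HQAux.dact_one hq qm qn m
  · intro h m
    rw [HQAux.EV_R hq (diagAct qm qn) m (hq.comul h),
      show (diagAct qm qn) = HQAux.dact hq qm qn from rfl, HQAux.end_R hq qm qn h]
    simp
  · intro h m
    rw [HQAux.EV_L hq (diagAct qm qn) m (hq.comul h),
      show (diagAct qm qn) = HQAux.dact hq qm qn from rfl, HQAux.end_L hq qm qn h]
    simp
end

section
/- Let H be a Hopf quasigroup and (M,ρ^M) a counital coassociative right H-comodule. Then H⊗M with action h·(k⊗m) = hk⊗m and coaction k⊗m ↦ k⊗m⁽⁰⁾⊗m⁽¹⁾ is a Long H-dimodule. -/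
open TensorProduct

variable {k H : Type*} [Field k] [AddCommMonoid H] [Module k H]

/-- A counital coassociative right comodule over a Hopf quasigroup. -/
structure RightComodule (hq : HopfQuasigroup k H) (M : Type*)
    [AddCommMonoid M] [Module k M] where
  coact : M →ₗ[k] M ⊗[k] H
  coassoc : ∀ m, (TensorProduct.assoc k M H H) ((coact.rTensor H) (coact m))
      = (LinearMap.lTensor M hq.comul) (coact m)
  coact_counit : ∀ m, (TensorProduct.rid k M) ((LinearMap.lTensor M hq.counit) (coact m)) = m

/-- A Long dimodule over a Hopf quasigroup: a left quasimodule and a counital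
coassociative right comodule such that `(h·m)⁽⁰⁾⊗(h·m)⁽¹⁾ = h·m⁽⁰⁾⊗m⁽¹⁾`. -/
structure LongDimodule (hq : HopfQuasigroup k H) (M : Type*)
    [AddCommMonoid M] [Module k M] extends LeftQuasimodule hq M, RightComodule hq M where
  compat : ∀ h m, coact (act h m) = ((act h).rTensor H) (coact m)


/-- For a counital coassociative right comodule `M` over a Hopf quasigroup `H`, the space
`H ⊗ M` with action `h·(k⊗m) = hk ⊗ m` and coaction `k⊗m ↦ k ⊗ m⁽⁰⁾ ⊗ m⁽¹⁾` is a Long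
dimodule. -/
theorem hopf_tensor_comodule_longDimodule {hq : HopfQuasigroup k H} {M : Type*}
    [AddCommMonoid M] [Module k M] (cm : RightComodule hq M) :
    ∃ ld : LongDimodule hq (H ⊗[k] M),
      ld.act = (LinearMap.rTensorHom M).comp hq.mul ∧
      ld.coact = ((TensorProduct.assoc k H M H).symm.toLinearMap).comp
        (LinearMap.lTensor H cm.coact) := by
  classical
  set A : H →ₗ[k] (H ⊗[k] M) →ₗ[k] (H ⊗[k] M) := (LinearMap.rTensorHom M).comp hq.mul with hA
  set C : (H ⊗[k] M) →ₗ[k] (H ⊗[k] M) ⊗[k] H :=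
    ((TensorProduct.assoc k H M H).symm.toLinearMap).comp (LinearMap.lTensor H cm.coact)
    with hC
  have hAapp : ∀ (h g : H) (m : M), A h (g ⊗ₜ[k] m) = (hq.mul h g) ⊗ₜ[k] m := by
    intro h g m; simp [hA]
  have hCapp : ∀ (g : H) (m : M),
      C (g ⊗ₜ[k] m) = (TensorProduct.assoc k H M H).symm (g ⊗ₜ[k] cm.coact m) := by
    intro g m; simp [hC]
  -- key bilinear identities for the quasimodule axioms
  have key1 : ∀ (g : H) (m : M),
      TensorProduct.lift (A.compl₂ ((A.comp hq.antipode).flip (g ⊗ₜ[k] m)))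
        = ((TensorProduct.mk k H M).flip m).comp
            (TensorProduct.lift (hq.mul.compl₂ ((hq.mul.comp hq.antipode).flip g))) := by
    intro g m
    apply TensorProduct.ext'
    intro a b
    simp [TensorProduct.lift.tmul, LinearMap.compl₂_apply, hAapp]
  have key2 : ∀ (g : H) (m : M),
      TensorProduct.lift ((A.comp hq.antipode).compl₂ (A.flip (g ⊗ₜ[k] m)))
        = ((TensorProduct.mk k H M).flip m).comp
            (TensorProduct.lift ((hq.mul.comp hq.antipode).compl₂ (hq.mul.flip g))) := by
    intro g m
    apply TensorProduct.ext'
    intro a b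
    simp [TensorProduct.lift.tmul, LinearMap.compl₂_apply, hAapp]
  -- identities used for the comodule axioms
  have claim1 : ∀ (g : H) (t : M ⊗[k] H),
      (TensorProduct.assoc k (H ⊗[k] M) H H)
          ((C.rTensor H) ((TensorProduct.assoc k H M H).symm (g ⊗ₜ[k] t)))
        = (LinearMap.rTensor (H ⊗[k] H) ((TensorProduct.mk k H M) g))
            ((TensorProduct.assoc k M H H) ((cm.coact.rTensor H) t)) := by
    intro g t
    induction t with
    | zero => simp
    | add y z hy hz => simp only [tmul_add, map_add, hy, hz]
    | tmul m₀ h₁ =>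
      simp only [TensorProduct.assoc_symm_tmul, LinearMap.rTensor_tmul, hCapp]
      induction cm.coact m₀ with
      | zero => simp
      | add y z hy hz =>
        simp only [tmul_add, add_tmul, map_add, hy, hz]
      | tmul a b =>
        simp
  have claim2 : ∀ (g : H) (t : M ⊗[k] H),
      (LinearMap.lTensor (H ⊗[k] M) hq.comul) ((TensorProduct.assoc k H M H).symm (g ⊗ₜ[k] t))
        = (LinearMap.rTensor (H ⊗[k] H) ((TensorProduct.mk k H M) g))
            ((LinearMap.lTensor M hq.comul) t) := by
    intro g t
    induction t with
    | zero => simp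
    | add y z hy hz => simp only [tmul_add, map_add, hy, hz]
    | tmul m₀ h₁ => simp
  have claim3 : ∀ (g : H) (t : M ⊗[k] H),
      (TensorProduct.rid k (H ⊗[k] M))
          ((LinearMap.lTensor (H ⊗[k] M) hq.counit) ((TensorProduct.assoc k H M H).symm (g ⊗ₜ[k] t)))
        = g ⊗ₜ[k] ((TensorProduct.rid k M) ((LinearMap.lTensor M hq.counit) t)) := by
    intro g t
    induction t with
    | zero => simp
    | add y z hy hz => simp only [tmul_add, map_add, hy, hz, hCapp]
    | tmul m₀ h₁ =>
      simp only [TensorProduct.assoc_symm_tmul, LinearMap.lTensor_tmul,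
        TensorProduct.rid_tmul, TensorProduct.smul_tmul]
      rw [TensorProduct.tmul_smul]
  have claim4 : ∀ (h g : H) (t : M ⊗[k] H),
      (TensorProduct.assoc k H M H).symm ((hq.mul h g) ⊗ₜ[k] t)
        = ((A h).rTensor H) ((TensorProduct.assoc k H M H).symm (g ⊗ₜ[k] t)) := by
    intro h g t
    induction t with
    | zero => simp
    | add y z hy hz => simp only [tmul_add, map_add, hy, hz]
    | tmul m₀ h₁ => simp [hAapp]
  refine ⟨{ act := A
            act_one := ?_
            act_antipode := ?_
            antipode_act := ?_
            coact := C
            coassoc := ?_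
            coact_counit := ?_
            compat := ?_ }, rfl, rfl⟩
  · -- act_one
    intro x
    induction x with
    | zero => simp
    | add y z hy hz => simp only [map_add, hy, hz]
    | tmul g m => simp [hAapp, hq.one_mul]
  · -- act_antipode
    intro h x
    induction x with
    | zero =>
      have : (A.comp hq.antipode).flip (0 : H ⊗[k] M) = 0 := map_zero _
      rw [this]
      have h2 : A.compl₂ (0 : H →ₗ[k] (H ⊗[k] M)) = 0 := by
        ext a d; simp [LinearMap.compl₂_apply]
      rw [h2]
      have h3 : TensorProduct.lift (0 : H →ₗ[k] H →ₗ[k] (H ⊗[k] M)) = 0 := by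
        apply TensorProduct.ext'; intro a b; simp
      rw [h3]; simp
    | add y z hy hz =>
      have : (A.comp hq.antipode).flip (y + z)
          = (A.comp hq.antipode).flip y + (A.comp hq.antipode).flip z := map_add _ _ _
      rw [this]
      have h2 : A.compl₂ ((A.comp hq.antipode).flip y + (A.comp hq.antipode).flip z)
          = A.compl₂ ((A.comp hq.antipode).flip y) + A.compl₂ ((A.comp hq.antipode).flip z) := by
        ext a d; simp [LinearMap.compl₂_apply]
      rw [h2]
      have h3 : ∀ (f g : H →ₗ[k] H →ₗ[k] (H ⊗[k] M)),
          TensorProduct.lift (f + g) = TensorProduct.lift f + TensorProduct.lift g := by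
        intro f g; apply TensorProduct.ext'; intro a b; simp
      rw [h3, LinearMap.add_apply, hy, hz, smul_add]
    | tmul g m =>
      rw [key1 g m, LinearMap.comp_apply, hq.mul_antipode_left g h]
      simp [TensorProduct.smul_tmul']
  · -- antipode_act
    intro h x
    induction x with
    | zero =>
      have : A.flip (0 : H ⊗[k] M) = 0 := map_zero _
      rw [this]
      have h2 : (A.comp hq.antipode).compl₂ (0 : H →ₗ[k] (H ⊗[k] M)) = 0 := by
        ext a d; simp [LinearMap.compl₂_apply]
      rw [h2]
      have h3 : TensorProduct.lift (0 : H →ₗ[k] H →ₗ[k] (H ⊗[k] M)) = 0 := by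
        apply TensorProduct.ext'; intro a b; simp
      rw [h3]; simp
    | add y z hy hz =>
      have : A.flip (y + z) = A.flip y + A.flip z := map_add _ _ _
      rw [this]
      have h2 : (A.comp hq.antipode).compl₂ (A.flip y + A.flip z)
          = (A.comp hq.antipode).compl₂ (A.flip y)
            + (A.comp hq.antipode).compl₂ (A.flip z) := by
        ext a d; simp [LinearMap.compl₂_apply]
      rw [h2]
      have h3 : ∀ (f g : H →ₗ[k] H →ₗ[k] (H ⊗[k] M)),
          TensorProduct.lift (f + g) = TensorProduct.lift f + TensorProduct.lift g := by
        intro f g; apply TensorProduct.ext'; intro a b; simp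
      rw [h3, LinearMap.add_apply, hy, hz, smul_add]
    | tmul g m =>
      rw [key2 g m, LinearMap.comp_apply, hq.antipode_mul_left g h]
      simp [TensorProduct.smul_tmul']
  · -- coassoc
    intro x
    induction x with
    | zero => simp
    | add y z hy hz => simp only [map_add, hy, hz]
    | tmul g m =>
      rw [hCapp g m, claim1 g (cm.coact m), cm.coassoc m, ← claim2 g (cm.coact m)]
  · -- coact_counit
    intro x
    induction x with
    | zero => simp
    | add y z hy hz => simp only [map_add, hy, hz]
    | tmul g m =>
      rw [hCapp g m, claim3 g (cm.coact m), cm.coact_counit m]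
  · -- compat
    intro h x
    induction x with
    | zero => simp
    | add y z hy hz => simp only [map_add, hy, hz]
    | tmul g m =>
      simp only [hAapp, hCapp, claim4]
end

section
/- The antipode S_A of a left H-quasimodule Hopf quasigroup A is H-linear: S_A(h·a) = h·S_A(a) for all h ∈ H, a ∈ A. -/
open TensorProduct

variable {k H : Type*} [Field k] [AddCommMonoid H] [Module k H]

/-- A left `H`-quasimodule Hopf quasigroup: a Hopf quasigroup `A` that is a left
`H`-quasimodule such that `(h₁·a)(h₂·b) = h·(ab)`, `h·1 = ε(h)1`,
`Δ(h·a) = h₁·a₁ ⊗ h₂·a₂` and `ε(h·a) = ε(h)ε(a)`. -/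
structure QuasimoduleHopfQuasigroup {A : Type*} [AddCommMonoid A] [Module k A]
    (hq : HopfQuasigroup k H) (hqA : HopfQuasigroup k A)
    extends LeftQuasimodule hq A where
  -- `(h₁·a)(h₂·b) = h·(ab)`
  act_mul : ∀ (h : H) (a b : A),
      TensorProduct.lift (((hqA.mul).comp (act.flip a)).compl₂ (act.flip b)) (hq.comul h)
        = act h (hqA.mul a b)
  -- `h·1 = ε(h)1`
  act_unit : ∀ h : H, act h hqA.one = hq.counit h • hqA.one
  -- `Δ(h·a) = h₁·a₁ ⊗ h₂·a₂`
  comul_act : ∀ (h : H) (a : A), hqA.comul (act h a)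
      = (TensorProduct.map (TensorProduct.lift act) (TensorProduct.lift act))
          ((TensorProduct.tensorTensorTensorComm k H H A A)
            ((hq.comul h) ⊗ₜ[k] (hqA.comul a)))
  -- `ε(h·a) = ε(h)ε(a)`
  counit_act : ∀ (h : H) (a : A), hqA.counit (act h a) = hq.counit h * hqA.counit a


section AntipodeLinear

variable {k H : Type*} [Field k] [AddCommMonoid H] [Module k H]
variable {A : Type*} [AddCommMonoid A] [Module k A]
variable {hq : HopfQuasigroup k H} {hqA : HopfQuasigroup k A}

/-- `u₁ S(u₂) = ε(u) 1` in any Hopf quasigroup. -/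
theorem HopfQuasigroup.mul_antipode_self (hq : HopfQuasigroup k H) (u : H) :
    TensorProduct.lift (hq.mul.compl₂ hq.antipode) (hq.comul u)
      = hq.counit u • hq.one := by
  have h1 := hq.antipode_mul_right hq.one u
  have h2 : (hq.mul.comp (hq.mul hq.one)).compl₂ hq.antipode
      = hq.mul.compl₂ hq.antipode := by
    ext x y
    simp [hq.one_mul]
  rwa [h2] at h1

namespace QMHQaux

/-- The inner map `(g₂ ⊗ g₃) ⊗ (c₂ ⊗ c₃) ↦ (g₂·c₂)(g₃·S(c₃))`. -/
noncomputable def innr (q : QuasimoduleHopfQuasigroup hq hqA) :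
    (H ⊗[k] H) ⊗[k] (A ⊗[k] A) →ₗ[k] A :=
  TensorProduct.lift hqA.mul ∘ₗ
    TensorProduct.map (TensorProduct.lift q.act)
      (TensorProduct.lift (q.act.compl₂ hqA.antipode)) ∘ₗ
    (TensorProduct.tensorTensorTensorComm k H H A A).toLinearMap

@[simp] theorem innr_tmul (q : QuasimoduleHopfQuasigroup hq hqA)
    (h2 h3 : H) (a2 a3 : A) :
    innr q ((h2 ⊗ₜ[k] h3) ⊗ₜ[k] (a2 ⊗ₜ[k] a3))
      = hqA.mul (q.act h2 a2) (q.act h3 (hqA.antipode a3)) := by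
  simp [innr]

/-- The outer map `(g₁ ⊗ (g₂ ⊗ g₃)) ⊗ (c₁ ⊗ (c₂ ⊗ c₃)) ↦
`S(g₁·c₁) ((g₂·c₂)(g₃·S(c₃)))`. -/
noncomputable def omg (q : QuasimoduleHopfQuasigroup hq hqA) :
    (H ⊗[k] (H ⊗[k] H)) ⊗[k] (A ⊗[k] (A ⊗[k] A)) →ₗ[k] A :=
  TensorProduct.lift hqA.mul ∘ₗ
    TensorProduct.map (hqA.antipode ∘ₗ TensorProduct.lift q.act) (innr q) ∘ₗ
    (TensorProduct.tensorTensorTensorComm k H (H ⊗[k] H) A (A ⊗[k] A)).toLinearMap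

@[simp] theorem omg_tmul (q : QuasimoduleHopfQuasigroup hq hqA)
    (x : H) (u : H ⊗[k] H) (b : A) (v : A ⊗[k] A) :
    omg q ((x ⊗ₜ[k] u) ⊗ₜ[k] (b ⊗ₜ[k] v))
      = hqA.mul (hqA.antipode (q.act x b)) (innr q (u ⊗ₜ[k] v)) := by
  simp [omg]

/-- `Σ (g₂·c₂)(g₃·S(c₃)) = ε(g)ε(c)1`. -/
theorem innr_comul (q : QuasimoduleHopfQuasigroup hq hqA) (g : H) (c : A) :
    innr q (hq.comul g ⊗ₜ[k] hqA.comul c)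
      = (hq.counit g * hqA.counit c) • hqA.one := by
  have ha : ∀ (u v : A), innr q (hq.comul g ⊗ₜ[k] (u ⊗ₜ[k] v))
      = q.act g (hqA.mul u (hqA.antipode v)) := by
    intro u v
    have key2 : ∀ t : H ⊗[k] H, innr q (t ⊗ₜ[k] (u ⊗ₜ[k] v))
        = TensorProduct.lift
            ((hqA.mul.comp (q.act.flip u)).compl₂ (q.act.flip (hqA.antipode v)))
            t := by
      intro t
      induction t using TensorProduct.induction_on with
      | zero => simp
      | tmul p r => simp
      | add s t hs ht => simp [TensorProduct.add_tmul, hs, ht]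
    rw [key2, q.act_mul]
  have hb : ∀ (w : A ⊗[k] A), innr q (hq.comul g ⊗ₜ[k] w)
      = q.act g (TensorProduct.lift (hqA.mul.compl₂ hqA.antipode) w) := by
    intro w
    induction w using TensorProduct.induction_on with
    | zero => simp
    | tmul u v => rw [ha]; simp
    | add s t hs ht => simp [TensorProduct.tmul_add, hs, ht]
  rw [hb, hqA.mul_antipode_self, map_smul, q.act_unit, smul_smul, mul_comm]

theorem omg_assoc (q : QuasimoduleHopfQuasigroup hq hqA)
    (y : H) (c : A) (u : H ⊗[k] H) (v : A ⊗[k] A) :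
    omg q ((TensorProduct.assoc k H H H (u ⊗ₜ[k] y)) ⊗ₜ[k]
        (TensorProduct.assoc k A A A (v ⊗ₜ[k] c)))
      = TensorProduct.lift
          ((hqA.mul.comp hqA.antipode).compl₂
            (hqA.mul.flip (q.act y (hqA.antipode c))))
          ((TensorProduct.map (TensorProduct.lift q.act) (TensorProduct.lift q.act))
            ((TensorProduct.tensorTensorTensorComm k H H A A) (u ⊗ₜ[k] v))) := by
  induction u using TensorProduct.induction_on with
  | zero => simp
  | tmul p pp =>
    induction v using TensorProduct.induction_on with
    | zero => simp
    | tmul r s => simp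
    | add s t hs ht =>
      simp only [TensorProduct.add_tmul, TensorProduct.tmul_add, map_add, hs, ht]
  | add s t hs ht =>
    simp only [TensorProduct.add_tmul, map_add, hs, ht]

end QMHQaux

end AntipodeLinear

/-- The antipode of a left `H`-quasimodule Hopf quasigroup `A` is `H`-linear:
`S_A(h·a) = h·S_A(a)`. -/
theorem quasimoduleHopfQuasigroup_antipode_linear {A : Type*} [AddCommMonoid A]
    [Module k A] {hq : HopfQuasigroup k H} {hqA : HopfQuasigroup k A}
    (q : QuasimoduleHopfQuasigroup hq hqA) (h : H) (a : A) :
    hqA.antipode (q.act h a) = q.act h (hqA.antipode a) := by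
  classical
  obtain ⟨S, hS⟩ := TensorProduct.exists_finset (hq.comul h)
  obtain ⟨T, hT⟩ := TensorProduct.exists_finset (hqA.comul a)
  have hH1 : ∑ p ∈ S, hq.counit p.2 • p.1 = h := by
    have := hq.comul_counit h
    rw [hS] at this
    simpa [map_sum] using this
  have hH2 : ∑ p ∈ S, hq.counit p.1 • p.2 = h := by
    have := hq.counit_comul h
    rw [hS] at this
    simpa [map_sum] using this
  have hA1 : ∑ r ∈ T, hqA.counit r.2 • r.1 = a := by
    have := hqA.comul_counit a
    rw [hT] at this
    simpa [map_sum] using this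
  have hA2 : ∑ r ∈ T, hqA.counit r.1 • r.2 = a := by
    have := hqA.counit_comul a
    rw [hT] at this
    simpa [map_sum] using this
  have way1 : QMHQaux.omg q ((LinearMap.lTensor H hq.comul (hq.comul h)) ⊗ₜ[k]
      (LinearMap.lTensor A hqA.comul (hqA.comul a)))
      = hqA.antipode (q.act h a) := by
    have lhs_eq : QMHQaux.omg q ((LinearMap.lTensor H hq.comul (hq.comul h)) ⊗ₜ[k]
        (LinearMap.lTensor A hqA.comul (hqA.comul a)))
        = ∑ p ∈ S, ∑ r ∈ T,
            (hq.counit p.2 * hqA.counit r.2) • hqA.antipode (q.act p.1 r.1) := by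
      rw [hS, hT]
      simp only [map_sum, LinearMap.lTensor_tmul, TensorProduct.sum_tmul,
        TensorProduct.tmul_sum, QMHQaux.omg_tmul, QMHQaux.innr_comul,
        map_smul, hqA.mul_one]
      rw [Finset.sum_comm]
    have rhs_eq : hqA.antipode (q.act h a)
        = ∑ p ∈ S, ∑ r ∈ T,
            (hq.counit p.2 * hqA.counit r.2) • hqA.antipode (q.act p.1 r.1) := by
      conv_lhs => rw [← hH1, ← hA1]
      simp only [map_sum, map_smul, LinearMap.sum_apply, LinearMap.smul_apply,
        Finset.smul_sum, smul_smul]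
      rw [Finset.sum_comm]
      exact Finset.sum_congr rfl fun _ _ => Finset.sum_congr rfl fun _ _ => by rw [mul_comm]
    rw [lhs_eq, rhs_eq]
  have way2 : QMHQaux.omg q
      (((TensorProduct.assoc k H H H) ((hq.comul.rTensor H) (hq.comul h))) ⊗ₜ[k]
        ((TensorProduct.assoc k A A A) ((hqA.comul.rTensor A) (hqA.comul a))))
      = q.act h (hqA.antipode a) := by
    have lhs_eq : QMHQaux.omg q
        (((TensorProduct.assoc k H H H) ((hq.comul.rTensor H) (hq.comul h))) ⊗ₜ[k]
          ((TensorProduct.assoc k A A A) ((hqA.comul.rTensor A) (hqA.comul a))))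
        = ∑ p ∈ S, ∑ r ∈ T,
            (hq.counit p.1 * hqA.counit r.1) • q.act p.2 (hqA.antipode r.2) := by
      rw [hS, hT]
      simp only [map_sum, LinearMap.rTensor_tmul, TensorProduct.sum_tmul,
        TensorProduct.tmul_sum]
      rw [Finset.sum_comm]
      refine Finset.sum_congr rfl fun p _ => Finset.sum_congr rfl fun r _ => ?_
      rw [QMHQaux.omg_assoc, ← q.comul_act, hqA.antipode_mul_left, q.counit_act]
    have rhs_eq : q.act h (hqA.antipode a)
        = ∑ p ∈ S, ∑ r ∈ T,
            (hq.counit p.1 * hqA.counit r.1) • q.act p.2 (hqA.antipode r.2) := by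
      conv_lhs => rw [← hH2, ← hA2]
      simp only [map_sum, map_smul, LinearMap.sum_apply, LinearMap.smul_apply,
        Finset.smul_sum, smul_smul]
      rw [Finset.sum_comm]
      exact Finset.sum_congr rfl fun _ _ => Finset.sum_congr rfl fun _ _ => by rw [mul_comm]
    rw [lhs_eq, rhs_eq]
  rw [← way1, ← hq.coassoc, ← hqA.coassoc, way2]
end

section
/- The antipode S_C of a right H-quasicomodule Hopf coquasigroup C is H-colinear: ρ^C(S_C(c)) = S_C(c⁽⁰⁾)⊗c⁽¹⁾ for all c ∈ C. -/
open TensorProduct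

/-- A Hopf coquasigroup over a field `k`: an associative unital algebra and counital (not
necessarily coassociative) coalgebra, with `comul` and `counit` algebra maps, together
with an antipode satisfying `S(h₁)h₂₍₁₎ ⊗ h₂₍₂₎ = h₁S(h₂₍₁₎) ⊗ h₂₍₂₎ = 1 ⊗ h` and
`h₁₍₁₎ ⊗ h₁₍₂₎S(h₂) = h₁₍₁₎ ⊗ S(h₁₍₂₎)h₂ = h ⊗ 1`. -/
structure HopfCoquasigroup (k : Type*) [Field k] (H : Type*) [AddCommMonoid H]
    [Module k H] where
  mul : H →ₗ[k] H →ₗ[k] H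
  one : H
  comul : H →ₗ[k] H ⊗[k] H
  counit : H →ₗ[k] k
  antipode : H →ₗ[k] H
  one_mul : ∀ h, mul one h = h
  mul_one : ∀ h, mul h one = h
  mul_assoc : ∀ a b c, mul (mul a b) c = mul a (mul b c)
  counit_comul : ∀ h, (TensorProduct.lid k H) ((counit.rTensor H) (comul h)) = h
  comul_counit : ∀ h, (TensorProduct.rid k H) ((LinearMap.lTensor H counit) (comul h)) = h
  counit_one : counit one = 1
  counit_mul : ∀ a b, counit (mul a b) = counit a * counit b
  comul_one : comul one = one ⊗ₜ[k] one
  comul_mul : ∀ a b, comul (mul a b)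
      = (TensorProduct.map (TensorProduct.lift mul) (TensorProduct.lift mul))
          ((TensorProduct.tensorTensorTensorComm k H H H H) ((comul a) ⊗ₜ[k] (comul b)))
  -- `S(h₁)h₂₍₁₎ ⊗ h₂₍₂₎ = 1 ⊗ h`
  coq1a : ∀ h, ((TensorProduct.lift (mul.comp antipode)).rTensor H)
      ((TensorProduct.assoc k H H H).symm ((LinearMap.lTensor H comul) (comul h)))
      = one ⊗ₜ[k] h
  -- `h₁S(h₂₍₁₎) ⊗ h₂₍₂₎ = 1 ⊗ h`
  coq1b : ∀ h, ((TensorProduct.lift (mul.compl₂ antipode)).rTensor H)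
      ((TensorProduct.assoc k H H H).symm ((LinearMap.lTensor H comul) (comul h)))
      = one ⊗ₜ[k] h
  -- `h₁₍₁₎ ⊗ h₁₍₂₎S(h₂) = h ⊗ 1`
  coq2a : ∀ h, (LinearMap.lTensor H (TensorProduct.lift (mul.compl₂ antipode)))
      ((TensorProduct.assoc k H H H) ((comul.rTensor H) (comul h)))
      = h ⊗ₜ[k] one
  -- `h₁₍₁₎ ⊗ S(h₁₍₂₎)h₂ = h ⊗ 1`
  coq2b : ∀ h, (LinearMap.lTensor H (TensorProduct.lift (mul.comp antipode)))
      ((TensorProduct.assoc k H H H) ((comul.rTensor H) (comul h)))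
      = h ⊗ₜ[k] one

variable {k H : Type*} [Field k] [AddCommMonoid H] [Module k H]

/-- A right quasicomodule over a Hopf coquasigroup: `m⁽⁰⁾ε(m⁽¹⁾) = m` and
`m⁽⁰⁾⁽⁰⁾ ⊗ m⁽⁰⁾⁽¹⁾S(m⁽¹⁾) = m ⊗ 1 = m⁽⁰⁾⁽⁰⁾ ⊗ S(m⁽⁰⁾⁽¹⁾)m⁽¹⁾`. -/
structure RightQuasicomodule (hc : HopfCoquasigroup k H) (M : Type*)
    [AddCommMonoid M] [Module k M] where
  coact : M →ₗ[k] M ⊗[k] H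
  coact_counit : ∀ m, (TensorProduct.rid k M) ((LinearMap.lTensor M hc.counit) (coact m)) = m
  -- `m⁽⁰⁾⁽⁰⁾ ⊗ m⁽⁰⁾⁽¹⁾S(m⁽¹⁾) = m ⊗ 1`
  coact_quasi1 : ∀ m, (LinearMap.lTensor M (TensorProduct.lift (hc.mul.compl₂ hc.antipode)))
      ((TensorProduct.assoc k M H H) ((coact.rTensor H) (coact m))) = m ⊗ₜ[k] hc.one
  -- `m⁽⁰⁾⁽⁰⁾ ⊗ S(m⁽⁰⁾⁽¹⁾)m⁽¹⁾ = m ⊗ 1`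
  coact_quasi2 : ∀ m, (LinearMap.lTensor M (TensorProduct.lift (hc.mul.comp hc.antipode)))
      ((TensorProduct.assoc k M H H) ((coact.rTensor H) (coact m))) = m ⊗ₜ[k] hc.one


/-- A right `H`-quasicomodule Hopf coquasigroup: a Hopf coquasigroup `C` that is a right
`H`-quasicomodule whose coaction is an algebra map and satisfies
`c⁽⁰⁾₍₁₎ ⊗ c⁽⁰⁾₍₂₎ ⊗ c⁽¹⁾ = c₍₁₎⁽⁰⁾ ⊗ c₍₂₎⁽⁰⁾ ⊗ c₍₁₎⁽¹⁾c₍₂₎⁽¹⁾` and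
`ε(c⁽⁰⁾)c⁽¹⁾ = ε(c)1`. -/
structure QuasicomoduleHopfCoquasigroup {C : Type*} [AddCommMonoid C] [Module k C]
    (hc : HopfCoquasigroup k H) (hcC : HopfCoquasigroup k C)
    extends RightQuasicomodule hc C where
  -- `ρ(ab) = ρ(a)ρ(b)`
  coact_mul : ∀ a b : C, coact (hcC.mul a b)
      = (TensorProduct.map (TensorProduct.lift hcC.mul) (TensorProduct.lift hc.mul))
          ((TensorProduct.tensorTensorTensorComm k C H C H)
            ((coact a) ⊗ₜ[k] (coact b)))
  -- `ρ(1) = 1 ⊗ 1`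
  coact_one : coact hcC.one = hcC.one ⊗ₜ[k] hc.one
  -- `c⁽⁰⁾₍₁₎ ⊗ c⁽⁰⁾₍₂₎ ⊗ c⁽¹⁾ = c₍₁₎⁽⁰⁾ ⊗ c₍₂₎⁽⁰⁾ ⊗ c₍₁₎⁽¹⁾c₍₂₎⁽¹⁾`
  comul_coact : ∀ c : C, (hcC.comul.rTensor H) (coact c)
      = (LinearMap.lTensor (C ⊗[k] C) (TensorProduct.lift hc.mul))
          ((TensorProduct.tensorTensorTensorComm k C H C H)
            ((TensorProduct.map coact coact) (hcC.comul c)))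
  -- `ε(c⁽⁰⁾)c⁽¹⁾ = ε(c)1`
  counit_coact : ∀ c : C, (TensorProduct.lid k H) ((hcC.counit.rTensor H) (coact c))
      = hcC.counit c • hc.one


section AuxProof

variable {C : Type*} [AddCommMonoid C] [Module k C]

/-- In any Hopf coquasigroup, if `f` satisfies the shape of `coq1a`/`coq1b` at `h`, then
applying `ε` to the last leg gives `f(Δh) = ε(h) • 1`. -/
private lemma hcq_counit_cancel {G : Type*} [AddCommMonoid G] [Module k G]
    (hg : HopfCoquasigroup k G) (f : G ⊗[k] G →ₗ[k] G) (h : G)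
    (hf : (f.rTensor G) ((TensorProduct.assoc k G G G).symm
        ((LinearMap.lTensor G hg.comul) (hg.comul h))) = hg.one ⊗ₜ[k] h) :
    f (hg.comul h) = hg.counit h • hg.one := by
  have claimA : ∀ y : (G ⊗[k] G) ⊗[k] G,
      (TensorProduct.rid k G) ((LinearMap.lTensor G hg.counit) ((f.rTensor G) y))
        = f ((TensorProduct.rid k (G ⊗[k] G))
            ((LinearMap.lTensor (G ⊗[k] G) hg.counit) y)) := by
    intro y
    induction y using TensorProduct.induction_on with
    | zero => simp
    | tmul u c => simp
    | add a b ha hb => simp [ha, hb]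
  have claimB : ∀ y : G ⊗[k] (G ⊗[k] G),
      (TensorProduct.rid k (G ⊗[k] G)) ((LinearMap.lTensor (G ⊗[k] G) hg.counit)
          ((TensorProduct.assoc k G G G).symm y))
        = (LinearMap.lTensor G ((TensorProduct.rid k G).toLinearMap ∘ₗ
            (LinearMap.lTensor G hg.counit))) y := by
    intro y
    induction y using TensorProduct.induction_on with
    | zero => simp
    | tmul g z =>
      induction z using TensorProduct.induction_on with
      | zero => simp
      | tmul a b => simp [TensorProduct.smul_tmul, TensorProduct.tmul_smul]
      | add u v hu hv => simp [TensorProduct.tmul_add, hu, hv]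
    | add a b ha hb => simp [ha, hb]
  have h2 := congrArg (fun y => (TensorProduct.rid k G)
      ((LinearMap.lTensor G hg.counit) y)) hf
  rw [claimA, claimB] at h2
  rw [← LinearMap.lTensor_comp_apply] at h2
  have e : (((TensorProduct.rid k G).toLinearMap ∘ₗ
      (LinearMap.lTensor G hg.counit)) ∘ₗ hg.comul) = LinearMap.id := by
    apply LinearMap.ext
    intro g
    simpa using hg.comul_counit g
  rw [e, LinearMap.lTensor_id] at h2
  simpa using h2

/-- `S(h₁)h₂ = ε(h)1` in a Hopf coquasigroup. -/
private lemma hcq_antipode_mul {G : Type*} [AddCommMonoid G] [Module k G]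
    (hg : HopfCoquasigroup k G) (h : G) :
    TensorProduct.lift (hg.mul.comp hg.antipode) (hg.comul h) = hg.counit h • hg.one :=
  hcq_counit_cancel hg _ h (hg.coq1a h)

/-- Multiplication on `C ⊗ H`. -/
private noncomputable def qmu (hc : HopfCoquasigroup k H) (hcC : HopfCoquasigroup k C) :
    (C ⊗[k] H) ⊗[k] (C ⊗[k] H) →ₗ[k] C ⊗[k] H :=
  (TensorProduct.map (TensorProduct.lift hcC.mul) (TensorProduct.lift hc.mul)) ∘ₗ
    (TensorProduct.tensorTensorTensorComm k C H C H).toLinearMap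

variable {hc : HopfCoquasigroup k H} {hcC : HopfCoquasigroup k C}

private lemma qmu_tmul (a c : C) (b d : H) :
    qmu hc hcC ((a ⊗ₜ[k] b) ⊗ₜ[k] (c ⊗ₜ[k] d)) = hcC.mul a c ⊗ₜ[k] hc.mul b d := by
  simp [qmu]

private lemma qmu_assoc (x y z : C ⊗[k] H) :
    qmu hc hcC (qmu hc hcC (x ⊗ₜ[k] y) ⊗ₜ[k] z)
      = qmu hc hcC (x ⊗ₜ[k] qmu hc hcC (y ⊗ₜ[k] z)) := by
  induction x using TensorProduct.induction_on with
  | zero => simp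
  | add x₁ x₂ h₁ h₂ => simp only [TensorProduct.add_tmul, map_add, h₁, h₂]
  | tmul a b =>
    induction y using TensorProduct.induction_on with
    | zero => simp
    | add y₁ y₂ h₁ h₂ =>
      simp only [TensorProduct.add_tmul, TensorProduct.tmul_add, map_add, h₁, h₂]
    | tmul c d =>
      induction z using TensorProduct.induction_on with
      | zero => simp
      | add z₁ z₂ h₁ h₂ =>
        simp only [TensorProduct.add_tmul, TensorProduct.tmul_add, map_add, h₁, h₂]
      | tmul e f =>
        simp [qmu_tmul, hcC.mul_assoc, hc.mul_assoc]

private lemma qmu_one_right (x : C ⊗[k] H) :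
    qmu hc hcC (x ⊗ₜ[k] (hcC.one ⊗ₜ[k] hc.one)) = x := by
  induction x using TensorProduct.induction_on with
  | zero => simp
  | tmul a b => simp [qmu_tmul, hcC.mul_one, hc.mul_one]
  | add a b ha hb => simp only [TensorProduct.add_tmul, map_add, ha, hb]

private lemma qmu_one_left (x : C ⊗[k] H) :
    qmu hc hcC (( hcC.one ⊗ₜ[k] hc.one) ⊗ₜ[k] x) = x := by
  induction x using TensorProduct.induction_on with
  | zero => simp
  | tmul a b => simp [qmu_tmul, hcC.one_mul, hc.one_mul]
  | add a b ha hb => simp only [TensorProduct.tmul_add, map_add, ha, hb]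

private lemma qmu_K1 :
    (qmu hc hcC) ∘ₗ (TensorProduct.map (hcC.antipode.rTensor H) LinearMap.id)
      = (LinearMap.rTensor H (TensorProduct.lift (hcC.mul.comp hcC.antipode))) ∘ₗ
        (LinearMap.lTensor (C ⊗[k] C) (TensorProduct.lift hc.mul)) ∘ₗ
        (TensorProduct.tensorTensorTensorComm k C H C H).toLinearMap := by
  ext a b c d
  simp [qmu_tmul]

private lemma qmu_K2 :
    ((hcC.counit.smulRight hcC.one).rTensor H)
      = (TensorProduct.mk k C H hcC.one) ∘ₗ (TensorProduct.lid k H).toLinearMap ∘ₗ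
        (hcC.counit.rTensor H) := by
  ext a b
  simp [TensorProduct.smul_tmul, TensorProduct.tmul_smul]

variable (q : QuasicomoduleHopfCoquasigroup hc hcC)

private lemma coact_mul' (a b : C) :
    q.coact (hcC.mul a b) = qmu hc hcC (q.coact a ⊗ₜ[k] q.coact b) := by
  rw [q.coact_mul]; rfl

/-- `γ(x₁)·ρ(x₂) = ε(x) 1⊗1` where `γ = (S⊗id)∘ρ`. -/
private lemma key3 (x : C) :
    qmu hc hcC ((TensorProduct.map ((hcC.antipode.rTensor H) ∘ₗ q.coact) q.coact)
        (hcC.comul x))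
      = hcC.counit x • (hcC.one ⊗ₜ[k] hc.one) := by
  have e1 : (TensorProduct.map ((hcC.antipode.rTensor H) ∘ₗ q.coact) q.coact)
      = (TensorProduct.map (hcC.antipode.rTensor H) LinearMap.id) ∘ₗ
        (TensorProduct.map q.coact q.coact) := by
    rw [← TensorProduct.map_comp]
    simp
  rw [e1, LinearMap.comp_apply, ← LinearMap.comp_apply (qmu hc hcC), qmu_K1]
  simp only [LinearMap.comp_apply, LinearEquiv.coe_coe]
  rw [← q.comul_coact x]
  rw [← LinearMap.comp_apply, ← LinearMap.rTensor_comp]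
  have e2 : (TensorProduct.lift (hcC.mul.comp hcC.antipode)) ∘ₗ hcC.comul
      = hcC.counit.smulRight hcC.one := by
    apply LinearMap.ext
    intro h
    simpa using hcq_antipode_mul hcC h
  rw [e2, qmu_K2]
  simp only [LinearMap.comp_apply, LinearEquiv.coe_coe]
  rw [q.counit_coact x]
  simp [TensorProduct.tmul_smul, TensorProduct.smul_tmul]

private lemma key2 (Y : C ⊗[k] (C ⊗[k] C)) :
    qmu hc hcC ((TensorProduct.map ((hcC.antipode.rTensor H) ∘ₗ q.coact) q.coact)
        ((LinearMap.lTensor C (TensorProduct.lift (hcC.mul.compl₂ hcC.antipode))) Y))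
      = qmu hc hcC ((TensorProduct.map
          ((qmu hc hcC) ∘ₗ (TensorProduct.map ((hcC.antipode.rTensor H) ∘ₗ q.coact) q.coact))
          (q.coact ∘ₗ hcC.antipode))
          ((TensorProduct.assoc k C C C).symm Y)) := by
  induction Y using TensorProduct.induction_on with
  | zero => simp
  | add a b ha hb => simp only [map_add, ha, hb]
  | tmul x z =>
    induction z using TensorProduct.induction_on with
    | zero => simp
    | add u v hu hv => simp only [TensorProduct.tmul_add, map_add, hu, hv]
    | tmul y z' =>
      simp only [LinearMap.lTensor_tmul, TensorProduct.map_tmul, LinearMap.comp_apply,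
        TensorProduct.lift.tmul, LinearMap.compl₂_apply, TensorProduct.assoc_symm_tmul]
      rw [coact_mul' q, qmu_assoc]

end AuxProof

/-- The antipode of a right `H`-quasicomodule Hopf coquasigroup is `H`-colinear:
`ρ(S_C(c)) = S_C(c⁽⁰⁾) ⊗ c⁽¹⁾`. -/
theorem quasicomoduleHopfCoquasigroup_antipode_colinear {C : Type*} [AddCommMonoid C]
    [Module k C] {hc : HopfCoquasigroup k H} {hcC : HopfCoquasigroup k C}
    (q : QuasicomoduleHopfCoquasigroup hc hcC) (c : C) :
    q.coact (hcC.antipode c) = (hcC.antipode.rTensor H) (q.coact c) := by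
  -- γ := (S ⊗ id) ∘ ρ, β := ρ ∘ S; we show β c = γ c.
  have h1 := hcC.coq2a c
  have h2 := congrArg (fun y => qmu hc hcC
      ((TensorProduct.map ((hcC.antipode.rTensor H) ∘ₗ q.coact) q.coact) y)) h1
  simp only [TensorProduct.map_tmul, LinearMap.comp_apply] at h2
  rw [q.coact_one, qmu_one_right, key2 q] at h2
  rw [LinearEquiv.symm_apply_apply] at h2
  -- now rewrite rTensor comul step
  have e3 : ∀ y : C ⊗[k] C,
      (TensorProduct.map
        ((qmu hc hcC) ∘ₗ (TensorProduct.map ((hcC.antipode.rTensor H) ∘ₗ q.coact) q.coact))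
        (q.coact ∘ₗ hcC.antipode)) ((hcC.comul.rTensor C) y)
      = (TensorProduct.map
          (((qmu hc hcC) ∘ₗ (TensorProduct.map ((hcC.antipode.rTensor H) ∘ₗ q.coact) q.coact))
            ∘ₗ hcC.comul)
          (q.coact ∘ₗ hcC.antipode)) y := by
    intro y
    induction y using TensorProduct.induction_on with
    | zero => simp
    | tmul a b => simp
    | add a b ha hb => simp only [map_add, ha, hb]
  rw [e3] at h2
  have e4 : ∀ y : C ⊗[k] C,
      qmu hc hcC ((TensorProduct.map
        (((qmu hc hcC) ∘ₗ (TensorProduct.map ((hcC.antipode.rTensor H) ∘ₗ q.coact) q.coact))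
          ∘ₗ hcC.comul)
        (q.coact ∘ₗ hcC.antipode)) y)
      = (q.coact ∘ₗ hcC.antipode)
          ((TensorProduct.lid k C) ((hcC.counit.rTensor C) y)) := by
    intro y
    induction y using TensorProduct.induction_on with
    | zero => simp
    | add a b ha hb => simp only [map_add, ha, hb]
    | tmul a b =>
      simp only [TensorProduct.map_tmul, LinearMap.comp_apply, LinearMap.rTensor_tmul,
        TensorProduct.lid_tmul, map_smul]
      rw [key3 q a]
      simp [← TensorProduct.smul_tmul', qmu_one_left]
  rw [e4, hcC.counit_comul c] at h2
  exact h2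
end
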